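/- arXiv:1905.13608 — 7 statements merged into one kernel-verified Lean document; each statement's English description precedes it below -/
import Mathlib

section
/- Let K = ℚ (or any field of characteristic 0) and n = 3. The points p = (1,2,3, 1,0,2) and q = (1,2,3, 0,2,1) in K³ × K³ are not in the same S₃-orbit (under the diagonal action), yet f_{j,k}(p) = f_{j,k}(q) for all (j,k) ∈ I with (j,k) ≠ (2,1), where I = {(j,k) : j ≤ 3, k ≤ ⌊3/(j+1)⌋, (j,k) ≠ (0,0)}. -/
theorem stmt_8 {K : Type*} [Field K] [CharZero K] :
    let p : (Fin 3 → K) × (Fin 3 → K) := (![1, 2, 3], ![1, 0, 2])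
    let q : (Fin 3 → K) × (Fin 3 → K) := (![1, 2, 3], ![0, 2, 1])
    (¬ ∃ σ : Equiv.Perm (Fin 3),
      (∀ i, q.1 (σ i) = p.1 i) ∧ (∀ i, q.2 (σ i) = p.2 i)) ∧
    (∀ j k : ℕ, j ≤ 3 → k ≤ 3 / (j + 1) → (j, k) ≠ (0, 0) → (j, k) ≠ (2, 1) →
      ∑ i, p.1 i ^ j * p.2 i ^ k = ∑ i, q.1 i ^ j * q.2 i ^ k) := by
  intro p q
  constructor
  · rintro ⟨σ, h1, h2⟩
    have hinj : Function.Injective (![1, 2, 3] : Fin 3 → K) := by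
      intro a b hab
      fin_cases a <;> fin_cases b <;> simp_all
    have hid : ∀ i, σ i = i := fun i => hinj (h1 i)
    have := h2 0
    rw [hid 0] at this
    norm_num [p, q] at this
  · intro j k hj hk hne hne2
    interval_cases j <;> interval_cases k <;>
      simp_all [p, q, Fin.sum_univ_three] <;> ring
end

section
/- Let K = ℚ (or any field of characteristic 0) and n = 3. The points p = (1,2,3, 5,0,8) and q = (1,2,3, 0,8,5) in K³ × K³ are not in the same S₃-orbit under the diagonal action, yet f_{j,k}(p) = f_{j,k}(q) for all (j,k) ∈ I with (j,k) ≠ (1,1). -/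
theorem stmt_9 {K : Type*} [Field K] [CharZero K] :
    let p : (Fin 3 → K) × (Fin 3 → K) := (![1, 2, 3], ![5, 0, 8])
    let q : (Fin 3 → K) × (Fin 3 → K) := (![1, 2, 3], ![0, 8, 5])
    (¬ ∃ σ : Equiv.Perm (Fin 3),
      (∀ i, q.1 (σ i) = p.1 i) ∧ (∀ i, q.2 (σ i) = p.2 i)) ∧
    (∀ j k : ℕ, j ≤ 3 → k ≤ 3 / (j + 1) → (j, k) ≠ (0, 0) → (j, k) ≠ (1, 1) →
      ∑ i, p.1 i ^ j * p.2 i ^ k = ∑ i, q.1 i ^ j * q.2 i ^ k) := by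
  intro p q
  constructor
  · rintro ⟨σ, h1, h2⟩
    have hx := h1 0
    have hy := h2 0
    have hcases : ∀ x : Fin 3, x = 0 ∨ x = 1 ∨ x = 2 := by decide
    rcases hcases (σ 0) with h | h | h <;> rw [h] at hx hy <;>
      simp [p, q] at hx hy
  · intro j k hj hk h0 h1
    interval_cases j <;> interval_cases k <;>
      simp_all [p, q, Fin.sum_univ_three] <;> ring
end

section
/- Let K = ℚ (or any field of characteristic 0) and n = 4. The points p = (1,2,3,4, 0,3,1,4) and q = (1,2,3,4, 1,0,4,3) in K⁴ × K⁴ are not in the same S₄-orbit under the diagonal action, yet f_{j,k}(p) = f_{j,k}(q) for all (j,k) ∈ I with (j,k) ≠ (3,1), where I = {(j,k) : j ≤ 4, k ≤ ⌊4/(j+1)⌋, (j,k) ≠ (0,0)}. -/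
theorem stmt_10 {K : Type*} [Field K] [CharZero K] :
    let p : (Fin 4 → K) × (Fin 4 → K) := (![1, 2, 3, 4], ![0, 3, 1, 4])
    let q : (Fin 4 → K) × (Fin 4 → K) := (![1, 2, 3, 4], ![1, 0, 4, 3])
    (¬ ∃ σ : Equiv.Perm (Fin 4),
      (∀ i, q.1 (σ i) = p.1 i) ∧ (∀ i, q.2 (σ i) = p.2 i)) ∧
    (∀ j k : ℕ, j ≤ 4 → k ≤ 4 / (j + 1) → (j, k) ≠ (0, 0) → (j, k) ≠ (3, 1) →
      ∑ i, p.1 i ^ j * p.2 i ^ k = ∑ i, q.1 i ^ j * q.2 i ^ k) := by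
  intro p q
  constructor
  · rintro ⟨σ, h1, h2⟩
    have h := h1 0
    have h' := h2 0
    have hc : ∀ x : Fin 4, x = 0 ∨ x = 1 ∨ x = 2 ∨ x = 3 := by decide
    rcases hc (σ 0) with hs | hs | hs | hs <;>
      rw [hs] at h h' <;> simp [p, q] at h h'
  · intro j k hj hk h0 h31
    interval_cases j <;> interval_cases k <;>
      simp_all [Fin.sum_univ_four, p, q] <;> ring
end

section
/- Let K = ℚ (or any field of characteristic 0) and n = 4. The points p = (3,1,0,−5, 6,0,10,1) and q = (3,1,0,−5, 1,10,6,0) in K⁴ × K⁴ are not in the same S₄-orbit under the diagonal action, yet f_{j,k}(p) = f_{j,k}(q) for all (j,k) ∈ I with (j,k) ≠ (2,1). -/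
theorem stmt_11 {K : Type*} [Field K] [CharZero K] :
    let p : (Fin 4 → K) × (Fin 4 → K) := (![3, 1, 0, -5], ![6, 0, 10, 1])
    let q : (Fin 4 → K) × (Fin 4 → K) := (![3, 1, 0, -5], ![1, 10, 6, 0])
    (¬ ∃ σ : Equiv.Perm (Fin 4),
      (∀ i, q.1 (σ i) = p.1 i) ∧ (∀ i, q.2 (σ i) = p.2 i)) ∧
    (∀ j k : ℕ, j ≤ 4 → k ≤ 4 / (j + 1) → (j, k) ≠ (0, 0) → (j, k) ≠ (2, 1) →
      ∑ i, p.1 i ^ j * p.2 i ^ k = ∑ i, q.1 i ^ j * q.2 i ^ k) := by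
  intro p q
  constructor
  · rintro ⟨σ, h1, h2⟩
    have hinj : Function.Injective (q.1) := by
      intro a b hab
      fin_cases a <;> fin_cases b <;> simp_all [q] <;> norm_num at hab
    have hσ0 : σ 0 = 0 := by
      apply hinj
      have := h1 0
      simp only [p, q] at this ⊢
      rw [this]
    have := h2 0
    rw [hσ0] at this
    simp [p, q] at this
  · intro j k hj hk h00 h21
    interval_cases j <;> interval_cases k <;>
      simp_all [p, q, Fin.sum_univ_four] <;> ring
end

section
/- Let K = ℚ (or any field of characteristic 0) and n = 4. The points p = (−1,0,1,2, 1,7,−3,9) and q = (−1,0,1,2, −3,1,9,7) in K⁴ × K⁴ are not in the same S₄-orbit under the diagonal action, yet f_{j,k}(p) = f_{j,k}(q) for all (j,k) ∈ I with (j,k) ≠ (1,1). -/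
/-!
The two points share their first coordinates `x = (-1, 0, 1, 2)`, and their second coordinates
are the same multiset `{1, 7, -3, 9}` in different orders.  Hence every `f_{j,0}` and `f_{0,k}`
agrees on them, and the three remaining mixed invariants `f_{1,2}, f_{2,1}, f_{3,1}` agree by
direct computation.  On the other hand the entries of `x` are pairwise distinct, so a permutation
preserving `x` is the identity, and the second coordinates are not equal.
-/

open Function Equiv

theorem Equiv.Perm.eq_one_of_injective_of_forall_apply_eq {α β : Type*} {x : α → β}
    (hx : Injective x) {σ : Perm α} (h : ∀ i, x (σ i) = x i) : σ = 1 :=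
  Equiv.ext fun i => hx (h i)

lemma admissible_exponents_cases {j k : ℕ} (hj : j ≤ 4) (hk : k ≤ 4 / (j + 1))
    (h11 : (j, k) ≠ (1, 1)) :
    k = 0 ∨ j = 0 ∨ (j, k) = (1, 2) ∨ (j, k) = (2, 1) ∨ (j, k) = (3, 1) := by
  interval_cases j <;> interval_cases k <;> simp_all

lemma injective_xCoords {K : Type*} [Ring K] [CharZero K] :
    Injective (![-1, 0, 1, 2] : Fin 4 → K) := by
  intro a b h
  fin_cases a <;> fin_cases b <;> norm_num at h <;> rfl

def yCoordsPerm : Perm (Fin 4) := ⟨![1, 3, 0, 2], ![2, 0, 3, 1], by decide, by decide⟩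

lemma yCoords_comp_yCoordsPerm {K : Type*} [Ring K] :
    (![-3, 1, 9, 7] : Fin 4 → K) ∘ yCoordsPerm = ![1, 7, -3, 9] := by
  ext i
  fin_cases i <;> rfl

theorem stmt_12 {K : Type*} [Field K] [CharZero K] :
    let p : (Fin 4 → K) × (Fin 4 → K) := (![-1, 0, 1, 2], ![1, 7, -3, 9])
    let q : (Fin 4 → K) × (Fin 4 → K) := (![-1, 0, 1, 2], ![-3, 1, 9, 7])
    (¬ ∃ σ : Equiv.Perm (Fin 4),
      (∀ i, q.1 (σ i) = p.1 i) ∧ (∀ i, q.2 (σ i) = p.2 i)) ∧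
    (∀ j k : ℕ, j ≤ 4 → k ≤ 4 / (j + 1) → (j, k) ≠ (0, 0) → (j, k) ≠ (1, 1) →
      ∑ i, p.1 i ^ j * p.2 i ^ k = ∑ i, q.1 i ^ j * q.2 i ^ k) := by
  intro p q
  constructor
  · rintro ⟨σ, hx, hy⟩
    obtain rfl := Perm.eq_one_of_injective_of_forall_apply_eq injective_xCoords hx
    have hy0 := hy 0
    norm_num [q, p] at hy0
  · intro j k hj hk _ h11
    rcases admissible_exponents_cases hj hk h11 with rfl | rfl | h | h | h
    · simp only [pow_zero, p, q]
    · simp only [pow_zero, one_mul, p, q]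
      rw [← yCoords_comp_yCoordsPerm]
      exact Fintype.sum_equiv yCoordsPerm _ _ fun _ => rfl
    all_goals
      obtain ⟨rfl, rfl⟩ := Prod.ext_iff.mp h
      norm_num [p, q, Fin.sum_univ_four, Matrix.cons_val_two, Matrix.cons_val_three]
end

section
/- Let K be a field of characteristic 0 and n = 2. The set S = {x₁+x₂, x₁²+x₂², y₁+y₂, y₁²+y₂², x₁y₁+x₂y₂} is a minimal separating set for the diagonal S₂-action on K² × K²: S separates S₂-orbits, but for every f ∈ S the set S \ {f} fails to separate some pair of points in distinct orbits. -/
lemma perm_sum2 {M : Type*} [AddCommMonoid M] (x x' : Fin 2 → M)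
    (σ : Equiv.Perm (Fin 2)) (h : ∀ i, x' (σ i) = x i) :
    x' 0 + x' 1 = x 0 + x 1 := by
  calc x' 0 + x' 1 = ∑ i, x' i := (Fin.sum_univ_two x').symm
    _ = ∑ i, x' (σ i) := (Equiv.sum_comp σ x').symm
    _ = ∑ i, x i := by simp [h]
    _ = x 0 + x 1 := Fin.sum_univ_two x

lemma key_alg {K : Type*} [Field K] [CharZero K] (a b c d a' b' c' d' : K)
    (h1 : a + b = a' + b') (h2 : a^2 + b^2 = a'^2 + b'^2)
    (h3 : c + d = c' + d') (h4 : c^2 + d^2 = c'^2 + d'^2)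
    (h5 : a*c + b*d = a'*c' + b'*d') :
    (a' = a ∧ b' = b ∧ c' = c ∧ d' = d) ∨ (a' = b ∧ b' = a ∧ c' = d ∧ d' = c) := by
  have hab : a * b = a' * b' := by
    linear_combination ((a+b+a'+b')/2) * h1 - (1/2) * h2
  have hcd : c * d = c' * d' := by
    linear_combination ((c+d+c'+d')/2) * h3 - (1/2) * h4
  have hx : (a' - a) * (a' - b) = 0 := by linear_combination (-a') * h1 + hab
  have hy : (c' - c) * (c' - d) = 0 := by linear_combination (-c') * h3 + hcd
  rcases mul_eq_zero.mp hx with hxa | hxb <;> rcases mul_eq_zero.mp hy with hyc | hyd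
  · left
    exact ⟨sub_eq_zero.mp hxa, by linear_combination -h1 - hxa,
      sub_eq_zero.mp hyc, by linear_combination -h3 - hyc⟩
  · have ha : a' = a := sub_eq_zero.mp hxa
    have hc : c' = d := sub_eq_zero.mp hyd
    have hb : b' = b := by linear_combination -h1 - hxa
    have hd : d' = c := by linear_combination -h3 - hyd
    have h0 : (a - b) * (c - d) = 0 := by
      subst ha hc hb hd; linear_combination h5
    rcases mul_eq_zero.mp h0 with h | h
    · right
      exact ⟨by linear_combination hxa + h, by linear_combination hb - h, hc, hd⟩
    · left
      exact ⟨ha, hb, by linear_combination hc - h, by linear_combination hd + h⟩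
  · have ha : a' = b := sub_eq_zero.mp hxb
    have hc : c' = c := sub_eq_zero.mp hyc
    have hb : b' = a := by linear_combination -h1 - hxb
    have hd : d' = d := by linear_combination -h3 - hyc
    have h0 : (a - b) * (c - d) = 0 := by
      subst ha hc hb hd; linear_combination h5
    rcases mul_eq_zero.mp h0 with h | h
    · left
      exact ⟨by linear_combination ha - h, by linear_combination hb + h, hc, hd⟩
    · right
      exact ⟨ha, hb, by linear_combination hc + h, by linear_combination hd - h⟩
  · right
    exact ⟨sub_eq_zero.mp hxb, by linear_combination -h1 - hxb,
      sub_eq_zero.mp hyd, by linear_combination -h3 - hyd⟩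

theorem stmt_13 {K : Type*} [Field K] [CharZero K] :
    let I : Finset (ℕ × ℕ) := {(1, 0), (2, 0), (0, 1), (0, 2), (1, 1)}
    let f : ℕ × ℕ → ((Fin 2 → K) × (Fin 2 → K)) → K :=
      fun jk p => ∑ i, p.1 i ^ jk.1 * p.2 i ^ jk.2
    -- S separates orbits
    (∀ p q : (Fin 2 → K) × (Fin 2 → K),
      (∀ jk ∈ I, f jk p = f jk q) →
      ∃ σ : Equiv.Perm (Fin 2),
        (∀ i, q.1 (σ i) = p.1 i) ∧ (∀ i, q.2 (σ i) = p.2 i)) ∧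
    -- minimality: removing any element destroys separation
    (∀ jk₀ ∈ I, ∃ p q : (Fin 2 → K) × (Fin 2 → K),
      (¬ ∃ σ : Equiv.Perm (Fin 2),
        (∀ i, q.1 (σ i) = p.1 i) ∧ (∀ i, q.2 (σ i) = p.2 i)) ∧
      (∀ jk ∈ I, jk ≠ jk₀ → f jk p = f jk q)) := by
  intro I f
  constructor
  · intro p q hpq
    have h1 := hpq (1, 0) (by simp [I])
    have h2 := hpq (2, 0) (by simp [I])
    have h3 := hpq (0, 1) (by simp [I])
    have h4 := hpq (0, 2) (by simp [I])
    have h5 := hpq (1, 1) (by simp [I])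
    simp only [f, Fin.sum_univ_two, pow_one, pow_zero, mul_one, one_mul] at h1 h2 h3 h4 h5
    rcases key_alg (p.1 0) (p.1 1) (p.2 0) (p.2 1) (q.1 0) (q.1 1) (q.2 0) (q.2 1)
      h1 h2 h3 h4 h5 with ⟨e1, e2, e3, e4⟩ | ⟨e1, e2, e3, e4⟩
    · exact ⟨1, fun i => by fin_cases i <;> simpa, fun i => by fin_cases i <;> simpa⟩
    · refine ⟨Equiv.swap 0 1, fun i => ?_, fun i => ?_⟩ <;>
        fin_cases i <;> simp [Equiv.swap_apply_left, Equiv.swap_apply_right, e1, e2, e3, e4]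
  · intro jk₀ hjk₀
    fin_cases hjk₀
    · -- remove (1,0): sums of x differ
      refine ⟨(![1, 1], ![0, 0]), (![-1, 1], ![0, 0]), ?_, ?_⟩
      · rintro ⟨σ, hx, -⟩
        have := perm_sum2 (fun i => (![1, 1] : Fin 2 → K) i)
          (fun i => (![-1, 1] : Fin 2 → K) i) σ hx
        simp at this
        norm_num at this
      · intro jk hjk hne
        fin_cases hjk <;> simp_all [f, Fin.sum_univ_two] <;> norm_num
    · -- remove (2,0): sums of squares of x differ
      refine ⟨(![1, 1], ![0, 0]), (![0, 2], ![0, 0]), ?_, ?_⟩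
      · rintro ⟨σ, hx, -⟩
        have := perm_sum2 (fun i => ((![1, 1] : Fin 2 → K) i)^2)
          (fun i => ((![0, 2] : Fin 2 → K) i)^2) σ (fun i => by simpa using congrArg (· ^ 2) (hx i))
        simp at this
        norm_num at this
      · intro jk hjk hne
        fin_cases hjk <;> simp_all [f, Fin.sum_univ_two] <;> norm_num
    · -- remove (0,1)
      refine ⟨(![0, 0], ![1, 1]), (![0, 0], ![-1, 1]), ?_, ?_⟩
      · rintro ⟨σ, -, hy⟩
        have := perm_sum2 (fun i => (![1, 1] : Fin 2 → K) i)
          (fun i => (![-1, 1] : Fin 2 → K) i) σ hy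
        simp at this
        norm_num at this
      · intro jk hjk hne
        fin_cases hjk <;> simp_all [f, Fin.sum_univ_two] <;> norm_num
    · -- remove (0,2)
      refine ⟨(![0, 0], ![1, 1]), (![0, 0], ![0, 2]), ?_, ?_⟩
      · rintro ⟨σ, -, hy⟩
        have := perm_sum2 (fun i => ((![1, 1] : Fin 2 → K) i)^2)
          (fun i => ((![0, 2] : Fin 2 → K) i)^2) σ (fun i => by simpa using congrArg (· ^ 2) (hy i))
        simp at this
        norm_num at this
      · intro jk hjk hne
        fin_cases hjk <;> simp_all [f, Fin.sum_univ_two] <;> norm_num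
    · -- remove (1,1)
      refine ⟨(![1, 0], ![1, 0]), (![1, 0], ![0, 1]), ?_, ?_⟩
      · rintro ⟨σ, hx, hy⟩
        have := perm_sum2
          (fun i => (![1, 0] : Fin 2 → K) i * (![1, 0] : Fin 2 → K) i)
          (fun i => (![1, 0] : Fin 2 → K) i * (![0, 1] : Fin 2 → K) i) σ
          (fun i => by simpa using congrArg₂ (· * ·) (hx i) (hy i))
        simp at this
      · intro jk hjk hne
        fin_cases hjk <;> simp_all [f, Fin.sum_univ_two] <;> norm_num
end

section
/- Let K be a field of characteristic 0, n ≥ 2, and let p = (a, b), q = (a, c) ∈ Kⁿ × Kⁿ share the same x-coordinate vector a, where a takes exactly r distinct values λ₁,...,λᵣ with multiplicities n₁ ≥ ... ≥ nᵣ (so n₁ + ... + nᵣ = n), arranged in blocks. If f_{j,k}(p) = f_{j,k}(q) for all j = 0,...,r−1 and k = 1,...,nᵣ, then for each k = 1,...,nᵣ and each block index i, the block power sums agree: ∑_{l=1}^{nᵢ} b_{n₁+...+n_{i−1}+l}ᵏ = ∑_{l=1}^{nᵢ} c_{n₁+...+n_{i−1}+l}ᵏ. -/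
theorem stmt_18 {K : Type*} [Field K] [CharZero K] (n r : ℕ) (hn : 2 ≤ n)
    (hr : 1 ≤ r) (lam : Fin r → K) (hlam : Function.Injective lam)
    (m : Fin r → ℕ) (hm1 : ∀ i, 1 ≤ m i) (hmono : Antitone m)
    (hsum : ∑ i, m i = n)
    (b c : (i : Fin r) → Fin (m i) → K)
    (h : ∀ j k : ℕ, j ≤ r - 1 → 1 ≤ k → k ≤ m ⟨r - 1, by omega⟩ →
      ∑ i, lam i ^ j * ∑ l, b i l ^ k = ∑ i, lam i ^ j * ∑ l, c i l ^ k) :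
    ∀ k : ℕ, 1 ≤ k → k ≤ m ⟨r - 1, by omega⟩ → ∀ i : Fin r,
      ∑ l, b i l ^ k = ∑ l, c i l ^ k := by
  intro k hk1 hk2 i
  set v : Fin r → K := fun i => (∑ l, b i l ^ k) - ∑ l, c i l ^ k with hv
  have hmul : (Matrix.vandermonde lam).transpose.mulVec v = 0 := by
    funext j
    have hj : (j : ℕ) ≤ r - 1 := by omega
    have := h j k hj hk1 hk2
    simp only [Matrix.mulVec, Matrix.transpose_apply, Matrix.vandermonde,
      Matrix.of_apply, dotProduct, hv]
    simp only [mul_sub]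
    rw [Finset.sum_sub_distrib]
    rw [this]
    simp
  have hdet : (Matrix.vandermonde lam).transpose.det ≠ 0 := by
    rw [Matrix.det_transpose, Matrix.det_vandermonde_ne_zero_iff]
    exact hlam
  have hv0 : v = 0 := Matrix.eq_zero_of_mulVec_eq_zero hdet hmul
  have := congrFun hv0 i
  simpa [hv, sub_eq_zero] using this
end
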